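/- Let n ≥ 2. There exists a dimensional constant c > 0 such that for all measurable matrix fields A, B : 𝕋^n → Sym^+(n) with ‖A‖, ‖B‖ ∈ L^{n/(n−1)}([0,1]^n), one has ∫_{[0,1]^n} |det(A(x))^{1/(n−1)} − det(B(x))^{1/(n−1)}| dx ≤ c^{1/(n−1)} ( ∫_{[0,1]^n} (‖A(x)‖ + ‖B(x)‖)^{n/(n−1)} dx )^{(n−1)/n} ( ∫_{[0,1]^n} ‖A(x) − B(x)‖^{n/(n−1)} dx )^{1/n}. In particular |𝔻(A) − 𝔻(B)| is bounded by the right-hand side, so 𝔻 is continuous with respect to strong L^{n/(n−1)} convergence on bounded sets. -/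

import Mathlib

/-!
Pointwise, the Hölder continuity of `t ↦ t ^ (1/(n-1))` on `[0, ∞)` and the Leibniz formula give
`|det A ^ (1/(n-1)) - det B ^ (1/(n-1))| ≤ (n! n) ^ (1/(n-1)) (‖A‖ + ‖B‖) ‖A - B‖ ^ (1/(n-1))`,
since each of the `n!` products in `det A - det B` differs from its counterpart by at most
`n (‖A‖ + ‖B‖) ^ (n-1) ‖A - B‖`. Integrating, Hölder's inequality with the conjugate exponents
`n/(n-1)` and `n` bounds `∫ (‖A‖ + ‖B‖) ‖A - B‖ ^ (1/(n-1))`, and the estimate holds with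
`c = n! n`.
-/

open MeasureTheory Filter Topology ENNReal

noncomputable section

/-- The unit cube `[0,1]^n`, identified with the torus `𝕋^n`. -/
def cube (n : ℕ) : Set (Fin n → ℝ) := Set.univ.pi fun _ => Set.Icc (0:ℝ) 1

/-- The operator norm of a real `n × n` matrix. -/
def opNorm {n : ℕ} (M : Matrix (Fin n) (Fin n) ℝ) : ℝ :=
  ‖Matrix.toEuclideanCLM (𝕜 := ℝ) M‖

open Finset
open scoped Matrix.Norms.L2Operator Nat

theorem opNorm_eq_norm {n : ℕ} (M : Matrix (Fin n) (Fin n) ℝ) : opNorm M = ‖M‖ := rfl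

theorem Real.abs_rpow_sub_rpow_le {s t r : ℝ} (hs : 0 ≤ s) (ht : 0 ≤ t) (hr₀ : 0 ≤ r)
    (hr₁ : r ≤ 1) : |s ^ r - t ^ r| ≤ |s - t| ^ r := by
  wlog hts : t ≤ s generalizing s t
  · rw [abs_sub_comm, abs_sub_comm s]
    exact this ht hs (le_of_not_ge hts)
  have hsub : s ^ r ≤ t ^ r + (s - t) ^ r := by
    simpa using Real.rpow_add_le_add_rpow ht (sub_nonneg.2 hts) hr₀ hr₁
  rw [abs_of_nonneg (sub_nonneg.2 (Real.rpow_le_rpow ht hts hr₀)),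
    abs_of_nonneg (sub_nonneg.2 hts)]
  linarith

theorem Finset.abs_prod_sub_prod_le {ι : Type*} (s : Finset ι) {f g : ι → ℝ} {C d : ℝ}
    (hC : 0 ≤ C) (hf : ∀ i ∈ s, |f i| ≤ C) (hg : ∀ i ∈ s, |g i| ≤ C)
    (hfg : ∀ i ∈ s, |f i - g i| ≤ d) :
    |∏ i ∈ s, f i - ∏ i ∈ s, g i| ≤ #s * C ^ (#s - 1) * d := by
  classical
  induction s using Finset.induction_on with
  | empty => simp
  | @insert a s ha ih =>
    simp only [forall_mem_insert] at hf hg hfg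
    have hprod : |∏ i ∈ s, f i| ≤ C ^ #s := by
      simpa [abs_prod] using prod_le_prod (fun i _ => abs_nonneg _) hf.2
    have hd : 0 ≤ d := (abs_nonneg _).trans hfg.1
    have hpow : C * (#s * C ^ (#s - 1)) ≤ #s * C ^ #s := by
      rcases Nat.eq_zero_or_pos #s with h0 | h0
      · simp [h0]
      · rw [mul_left_comm, mul_pow_sub_one h0.ne']
    rw [prod_insert ha, prod_insert ha, card_insert_of_notMem ha,
      show f a * ∏ i ∈ s, f i - g a * ∏ i ∈ s, g i
        = (f a - g a) * ∏ i ∈ s, f i + g a * (∏ i ∈ s, f i - ∏ i ∈ s, g i) by ring]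
    calc _ ≤ |f a - g a| * |∏ i ∈ s, f i| + |g a| * |∏ i ∈ s, f i - ∏ i ∈ s, g i| := by
          rw [← abs_mul, ← abs_mul]
          exact abs_add_le _ _
      _ ≤ d * C ^ #s + C * (#s * C ^ (#s - 1) * d) := by
          gcongr
          exacts [hfg.1, hg.1, ih hf.2 hg.2 hfg.2]
      _ ≤ ((#s + 1 : ℕ) : ℝ) * C ^ (#s + 1 - 1) * d := by
          push_cast
          nlinarith

namespace Matrix

variable {ι : Type*} [Fintype ι] [DecidableEq ι]

theorem norm_apply_le_l2_opNorm (M : Matrix ι ι ℝ) (i j : ι) : ‖M i j‖ ≤ ‖M‖ := by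
  have hcol : M i j = toEuclideanCLM (𝕜 := ℝ) M (EuclideanSpace.single j 1) i := by
    simp [EuclideanSpace.single]
  calc ‖M i j‖ ≤ ‖toEuclideanCLM (𝕜 := ℝ) M (EuclideanSpace.single j 1)‖ :=
        hcol ▸ PiLp.norm_apply_le _ i
    _ ≤ ‖M‖ * ‖EuclideanSpace.single j (1 : ℝ)‖ := (toEuclideanCLM (𝕜 := ℝ) M).le_opNorm _
    _ = ‖M‖ := by simp

/-- `Matrix` carries no `MeasurableSpace` instance, so measurability goes through `ι → ι → ℝ`. -/
theorem measurable_l2_opNorm_of_measurable_apply {α : Type*} [MeasurableSpace α]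
    {A : α → Matrix ι ι ℝ} (hA : ∀ i j, Measurable fun x => A x i j) :
    Measurable fun x => ‖A x‖ :=
  have hcont : Continuous fun M : ι → ι → ℝ => ‖Matrix.of M‖ :=
    continuous_norm.comp (by exact continuous_id)
  hcont.measurable.comp (measurable_pi_iff.2 fun i => measurable_pi_iff.2 (hA i))

theorem abs_det_sub_det_le (A B : Matrix ι ι ℝ) :
    |A.det - B.det| ≤ ((Fintype.card ι)! * Fintype.card ι : ℕ) *
      (‖A‖ + ‖B‖) ^ (Fintype.card ι - 1) * ‖A - B‖ := by
  have hterm (σ : Equiv.Perm ι) : |Equiv.Perm.sign σ • ∏ i, A (σ i) i -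
      Equiv.Perm.sign σ • ∏ i, B (σ i) i| ≤
      Fintype.card ι * (‖A‖ + ‖B‖) ^ (Fintype.card ι - 1) * ‖A - B‖ := by
    rw [← smul_sub, Units.smul_def, zsmul_eq_mul, abs_mul, abs_unit_intCast, one_mul]
    exact Finset.abs_prod_sub_prod_le _ (by positivity)
      (fun i _ => (A.norm_apply_le_l2_opNorm _ _).trans (le_add_of_nonneg_right (norm_nonneg _)))
      (fun i _ => (B.norm_apply_le_l2_opNorm _ _).trans (le_add_of_nonneg_left (norm_nonneg _)))
      (fun i _ => (A - B).norm_apply_le_l2_opNorm (σ i) i)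
  rw [det_apply, det_apply, ← Finset.sum_sub_distrib]
  refine (Finset.abs_sum_le_sum_abs _ _).trans ((Finset.sum_le_sum fun σ _ => hterm σ).trans ?_)
  rw [Finset.sum_const, Finset.card_univ, Fintype.card_perm, nsmul_eq_mul]
  exact le_of_eq (by push_cast; ring)

theorem abs_det_rpow_sub_det_rpow_le {n : ℕ} (hn : 2 ≤ n)
    {A B : Matrix (Fin n) (Fin n) ℝ} (hA : A.PosSemidef) (hB : B.PosSemidef) :
    |A.det ^ (1 / ((n : ℝ) - 1)) - B.det ^ (1 / ((n : ℝ) - 1))| ≤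
      ((n ! * n : ℕ) : ℝ) ^ (1 / ((n : ℝ) - 1)) *
        ((‖A‖ + ‖B‖) * ‖A - B‖ ^ (1 / ((n : ℝ) - 1))) := by
  have hr : 1 / ((n : ℝ) - 1) = ((n - 1 : ℕ) : ℝ)⁻¹ := by
    rw [Nat.cast_sub (by omega), Nat.cast_one, one_div]
  have hr₁ : ((n - 1 : ℕ) : ℝ)⁻¹ ≤ 1 :=
    inv_le_one_of_one_le₀ (by exact_mod_cast (by omega : 1 ≤ n - 1))
  rw [hr]
  calc _ ≤ |A.det - B.det| ^ ((n - 1 : ℕ) : ℝ)⁻¹ :=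
        Real.abs_rpow_sub_rpow_le hA.det_nonneg hB.det_nonneg (by positivity) hr₁
    _ ≤ ((n ! * n : ℕ) * (‖A‖ + ‖B‖) ^ (n - 1) * ‖A - B‖) ^ ((n - 1 : ℕ) : ℝ)⁻¹ := by
        gcongr
        simpa using abs_det_sub_det_le A B
    _ = _ := by
        rw [Real.mul_rpow (by positivity) (by positivity),
          Real.mul_rpow (by positivity) (by positivity),
          Real.pow_rpow_inv_natCast (by positivity) (by omega)]
        ring

end Matrix

namespace MeasureTheory

variable {α : Type*} [MeasurableSpace α] {μ : Measure α} {p q : ℝ} {f g : α → ℝ}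

theorem MemLp.rpow_div_of_holderConjugate (hpq : p.HolderConjugate q) (hg₀ : ∀ x, 0 ≤ g x)
    (hg : MemLp g (ENNReal.ofReal p) μ) :
    MemLp (fun x => g x ^ (p / q)) (ENNReal.ofReal q) μ := by
  have h := hg.norm_rpow_div (ENNReal.ofReal (p / q))
  rw [ENNReal.toReal_ofReal (div_nonneg hpq.nonneg hpq.symm.nonneg),
    ← ENNReal.ofReal_div_of_pos (div_pos hpq.pos hpq.symm.pos), div_div_cancel₀ hpq.pos.ne'] at h
  convert h using 3 with x
  rw [Real.norm_of_nonneg (hg₀ x)]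

theorem integrable_mul_rpow_div_of_holderConjugate (hpq : p.HolderConjugate q)
    (hg₀ : ∀ x, 0 ≤ g x) (hf : MemLp f (ENNReal.ofReal p) μ)
    (hg : MemLp g (ENNReal.ofReal p) μ) :
    Integrable (fun x => f x * g x ^ (p / q)) μ :=
  have : ENNReal.HolderConjugate (ENNReal.ofReal p) (ENNReal.ofReal q) :=
    hpq.toNNReal.coe_ennreal
  hf.integrable_mul (hg.rpow_div_of_holderConjugate hpq hg₀)

theorem integral_mul_rpow_div_le_of_holderConjugate (hpq : p.HolderConjugate q)
    (hf₀ : ∀ x, 0 ≤ f x) (hg₀ : ∀ x, 0 ≤ g x) (hf : MemLp f (ENNReal.ofReal p) μ)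
    (hg : MemLp g (ENNReal.ofReal p) μ) :
    ∫ x, f x * g x ^ (p / q) ∂μ ≤
      (∫ x, f x ^ p ∂μ) ^ (1 / p) * (∫ x, g x ^ p ∂μ) ^ (1 / q) := by
  have h := integral_mul_le_Lp_mul_Lq_of_nonneg hpq (ae_of_all _ hf₀)
    (ae_of_all _ fun x => Real.rpow_nonneg (hg₀ x) _) hf (hg.rpow_div_of_holderConjugate hpq hg₀)
  simpa only [← Real.rpow_mul (hg₀ _), div_mul_cancel₀ p hpq.symm.pos.ne'] using h

end MeasureTheory

/-- **Strong `L^{n/(n-1)}` continuity estimate for the functional `𝔻`.**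
There is a dimensional constant `c > 0` such that for all matrix fields
`A, B : 𝕋^n → Sym^+(n)` with operator norms in `L^{n/(n-1)}`,
`∫ |det(A)^{1/(n-1)} - det(B)^{1/(n-1)}| ≤ c^{1/(n-1)} (∫ (‖A‖+‖B‖)^{n/(n-1)})^{(n-1)/n}
(∫ ‖A-B‖^{n/(n-1)})^{1/n}`. -/
theorem D_strong_continuity_estimate
    (n : ℕ) (hn : 2 ≤ n) :
    ∃ c : ℝ, 0 < c ∧
      ∀ A B : (Fin n → ℝ) → Matrix (Fin n) (Fin n) ℝ,
        (∀ i j, Measurable fun x => A x i j) →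
        (∀ i j, Measurable fun x => B x i j) →
        (∀ x, (A x).PosSemidef) → (∀ x, (B x).PosSemidef) →
        MemLp (fun x => opNorm (A x)) ((n : ℝ≥0∞) / ((n : ℝ≥0∞) - 1))
          (volume.restrict (cube n)) →
        MemLp (fun x => opNorm (B x)) ((n : ℝ≥0∞) / ((n : ℝ≥0∞) - 1))
          (volume.restrict (cube n)) →
        (∫ x in cube n,
            |(A x).det ^ ((1:ℝ)/((n:ℝ)-1)) - (B x).det ^ ((1:ℝ)/((n:ℝ)-1))|)
          ≤ c ^ ((1:ℝ)/((n:ℝ)-1)) *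
            (∫ x in cube n,
                (opNorm (A x) + opNorm (B x)) ^ ((n:ℝ)/((n:ℝ)-1))) ^ (((n:ℝ)-1)/(n:ℝ)) *
            (∫ x in cube n, opNorm (A x - B x) ^ ((n:ℝ)/((n:ℝ)-1))) ^ ((n:ℝ)⁻¹) := by
  have hn₁ : (1 : ℝ) < n := by exact_mod_cast hn
  have hpq : (n / (n - 1) : ℝ).HolderConjugate n := (Real.HolderConjugate.conjExponent hn₁).symm
  have hp : (n : ℝ≥0∞) / ((n : ℝ≥0∞) - 1) = ENNReal.ofReal (n / (n - 1)) := by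
    rw [ENNReal.ofReal_div_of_pos (by linarith), ENNReal.ofReal_sub _ zero_le_one,
      ENNReal.ofReal_natCast, ENNReal.ofReal_one]
  have hr : (n / (n - 1) : ℝ) / n = 1 / (n - 1) := by field_simp
  refine ⟨(n ! * n : ℕ), by positivity, fun A B hA hB hApsd hBpsd hAp hBp => ?_⟩
  simp only [opNorm_eq_norm, hp] at hAp hBp ⊢
  have hsum : MemLp (fun x => ‖A x‖ + ‖B x‖) _ _ := hAp.add hBp
  have hdiff : MemLp (fun x => ‖A x - B x‖) _ _ :=
    hsum.of_le (Matrix.measurable_l2_opNorm_of_measurable_apply fun i j =>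
      (hA i j).sub (hB i j)).aestronglyMeasurable (ae_of_all _ fun x => by
        rw [norm_norm, Real.norm_of_nonneg (by positivity)]
        exact norm_sub_le _ _)
  have hint := integrable_mul_rpow_div_of_holderConjugate hpq (fun _ => norm_nonneg _) hsum hdiff
  have hholder := integral_mul_rpow_div_le_of_holderConjugate hpq
    (fun _ => by positivity) (fun _ => norm_nonneg _) hsum hdiff
  rw [hr] at hint
  rw [hr, one_div_div, one_div (n : ℝ)] at hholder
  calc _ ≤ ∫ x in cube n, ((n ! * n : ℕ) : ℝ) ^ (1 / ((n : ℝ) - 1)) *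
        ((‖A x‖ + ‖B x‖) * ‖A x - B x‖ ^ (1 / ((n : ℝ) - 1))) :=
        integral_mono_of_nonneg (ae_of_all _ fun _ => abs_nonneg _) (hint.const_mul _)
          (ae_of_all _ fun x => Matrix.abs_det_rpow_sub_det_rpow_le hn (hApsd x) (hBpsd x))
    _ = ((n ! * n : ℕ) : ℝ) ^ (1 / ((n : ℝ) - 1)) *
        ∫ x in cube n, (‖A x‖ + ‖B x‖) * ‖A x - B x‖ ^ (1 / ((n : ℝ) - 1)) :=
        integral_const_mul _ _
    _ ≤ _ := by
        rw [mul_assoc]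
        exact mul_le_mul_of_nonneg_left hholder (by positivity)
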